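/- arXiv:0902.4679 — 6 statements merged into one kernel-verified Lean document; each statement's English description precedes it below -/
import Mathlib

section
/- There is no choice of quaternions c₀, c₁, c₂ and non-real quaternion p such that q² = (q-p)² c₂ + (q-p) c₁ + c₀ holds for all quaternions q. -/
/-!
Put `q = p + x` and `q = p - x` and subtract: `2 (p x + x p) = 2 x c₁` for every `x`.
At `x = 1` this gives `c₁ = 2 p`, hence `p x = x p` for every `x`. But only real quaternions
are central, since `p` commuting with `i` and `j` kills all three imaginary parts.
-/

local notation "ℍ" => Quaternion ℝ

instance QuaternionAlgebra.instIsAddTorsionFree {R : Type*} [CommRing R] [IsAddTorsionFree R]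
    {c₁ c₂ c₃ : R} : IsAddTorsionFree (QuaternionAlgebra R c₁ c₂ c₃) :=
  Function.Injective.isAddTorsionFree (linearEquivTuple c₁ c₂ c₃).toAddMonoidHom
    (linearEquivTuple c₁ c₂ c₃).injective

instance Quaternion.instIsAddTorsionFree {R : Type*} [CommRing R] [IsAddTorsionFree R] :
    IsAddTorsionFree (Quaternion R) :=
  inferInstanceAs (IsAddTorsionFree (QuaternionAlgebra R (-1) 0 (-1)))

theorem Quaternion.im_eq_zero_of_forall_commute {R : Type*} [CommRing R] [IsAddTorsionFree R]
    {p : Quaternion R} (h : ∀ x, Commute p x) : p.im = 0 := by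
  let i : Quaternion R := ⟨0, 1, 0, 0⟩
  let j : Quaternion R := ⟨0, 0, 1, 0⟩
  have hI : (p * j).imK = (j * p).imK := by rw [(h j).eq]
  have hJ : (p * i).imJ = (i * p).imJ := by rw [(h i).eq]
  have hK : (p * i).imK = (i * p).imK := by rw [(h i).eq]
  simp only [Quaternion.imJ_mul, Quaternion.imK_mul] at hI hJ hK
  ext <;> simp [i, j] at hI hJ hK ⊢ <;> grind

section QuadraticExpansion

variable {R : Type*} [Ring R] [IsAddTorsionFree R] {p c₀ c₁ c₂ : R}

theorem mul_add_mul_eq_of_forall_sq_eq (h : ∀ q, q ^ 2 = (q - p) ^ 2 * c₂ + (q - p) * c₁ + c₀)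
    (x : R) : p * x + x * p = x * c₁ := by
  have hplus := h (p + x)
  have hminus := h (p - x)
  rw [add_sub_cancel_left] at hplus
  rw [sub_sub_cancel_left] at hminus
  apply nsmul_right_injective two_ne_zero
  calc 2 • (p * x + x * p) = (p + x) ^ 2 - (p - x) ^ 2 := by noncomm_ring
    _ = (x ^ 2 * c₂ + x * c₁ + c₀) - ((-x) ^ 2 * c₂ + (-x) * c₁ + c₀) := by
      rw [← hplus, ← hminus]
    _ = 2 • (x * c₁) := by noncomm_ring

theorem commute_of_forall_sq_eq (h : ∀ q, q ^ 2 = (q - p) ^ 2 * c₂ + (q - p) * c₁ + c₀)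
    (x : R) : Commute p x := by
  have hc₁ : c₁ = p + p := by simpa using (mul_add_mul_eq_of_forall_sq_eq h 1).symm
  have hx := mul_add_mul_eq_of_forall_sq_eq h x
  rw [hc₁, mul_add] at hx
  exact add_right_cancel hx

end QuadraticExpansion

theorem no_ordinary_expansion :
    ¬ ∃ (p c₀ c₁ c₂ : ℍ), p.im ≠ 0 ∧
      ∀ q : ℍ, q^2 = (q - p)^2 * c₂ + (q - p) * c₁ + c₀ := by
  rintro ⟨p, c₀, c₁, c₂, hp, h⟩
  exact hp (Quaternion.im_eq_zero_of_forall_commute (commute_of_forall_sq_eq h))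
end

section
/- Quaternionic binomial theorem for regular powers: for every p ∈ H and every m ∈ ℕ, one has qᵐ = ∑_{k=0}^{m} (q-p)^{*k} p^{m-k} · C(m,k) for all q ∈ H, where C(m,k) is the binomial coefficient. -/
local notation "ℍ" => Quaternion ℝ

/-- Convolution (star) product of coefficient sequences. -/
noncomputable def conv (a b : ℕ → ℍ) : ℕ → ℍ := fun n => ∑ k ∈ Finset.range (n+1), a k * b (n-k)

/-- Coefficient sequence of the polynomial `q - p` (right coefficients). -/
noncomputable def binomSeq (p : ℍ) : ℕ → ℍ := fun k => if k = 0 then -p else if k = 1 then 1 else 0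

/-- n-fold star (convolution) power of a coefficient sequence. -/
noncomputable def convPow (a : ℕ → ℍ) : ℕ → ℕ → ℍ
  | 0 => fun k => if k = 0 then 1 else 0
  | n+1 => conv (convPow a n) a

/-- The regular power `(q-p)^{*n}` evaluated at `q`. -/
noncomputable def starPow (p : ℍ) (n : ℕ) (q : ℍ) : ℍ :=
  ∑ k ∈ Finset.range (n+1), q^k * convPow (binomSeq p) n k

noncomputable def omegaDist (q p : ℍ) : ℝ :=
  Real.sqrt ((q.re - p.re)^2 + (‖q.im‖ + ‖p.im‖)^2)

/-- `q` and `p` lie in a common complex line `L_I = ℝ + Iℝ`. -/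
def SameLine (q p : ℍ) : Prop :=
  ∃ I : ℍ, I^2 = -1 ∧ (∃ a b : ℝ, q = (a : ℍ) + b • I) ∧ (∃ a b : ℝ, p = (a : ℍ) + b • I)

open Classical in
noncomputable def sigmaDist (q p : ℍ) : ℝ :=
  if SameLine q p then ‖q - p‖ else omegaDist q p

lemma conv_binomSeq (p : ℍ) (A : ℕ → ℍ) (k : ℕ) :
    conv A (binomSeq p) k = (if k = 0 then 0 else A (k-1)) + A k * (-p) := by
  unfold conv
  cases k with
  | zero => simp [binomSeq]
  | succ k =>
    rw [Finset.sum_range_succ]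
    have h : ∀ i ∈ Finset.range (k+1), A i * binomSeq p (k+1-i) =
        if i = k then A k else 0 := by
      intro i hi
      simp only [Finset.mem_range] at hi
      by_cases h : i = k
      · subst h; simp [binomSeq]
      · have h1 : k + 1 - i ≠ 0 := by omega
        have h2 : k + 1 - i ≠ 1 := by omega
        simp [binomSeq, h1, h2, h]
    rw [Finset.sum_congr rfl h, Finset.sum_ite_eq' (Finset.range (k+1)) k]
    simp [binomSeq]

lemma convPow_eq_zero (p : ℍ) : ∀ n k, n < k → convPow (binomSeq p) n k = 0 := by
  intro n
  induction n with
  | zero =>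
    intro k hk
    show (if k = 0 then (1:ℍ) else 0) = 0
    simp; omega
  | succ n ih =>
    intro k hk
    show conv (convPow (binomSeq p) n) (binomSeq p) k = 0
    rw [conv_binomSeq]
    rw [ih k (by omega)]
    have h1 : k ≠ 0 := by omega
    rw [if_neg h1, ih (k-1) (by omega)]
    simp

lemma starPow_succ (p : ℍ) (n : ℕ) (q : ℍ) :
    starPow p (n+1) q = q * starPow p n q - starPow p n q * p := by
  set A := convPow (binomSeq p) n with hA
  have hstep : starPow p (n+1) q
      = ∑ k ∈ Finset.range (n+2), q^k * ((if k = 0 then 0 else A (k-1)) + A k * (-p)) := by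
    unfold starPow
    refine Finset.sum_congr rfl fun k _ => ?_
    rw [show convPow (binomSeq p) (n+1) k = conv A (binomSeq p) k from rfl, conv_binomSeq]
  rw [hstep]
  simp only [mul_add, Finset.sum_add_distrib]
  have e1 : ∑ k ∈ Finset.range (n+2), q^k * (if k = 0 then 0 else A (k-1))
      = q * starPow p n q := by
    rw [Finset.sum_range_succ']
    simp only [if_neg (Nat.succ_ne_zero _), if_pos rfl, Nat.add_sub_cancel, mul_zero, add_zero]
    unfold starPow
    rw [Finset.mul_sum]
    simp only [if_true, mul_zero, add_zero, ← hA, ← mul_assoc, ← pow_succ']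
  have e2 : ∑ k ∈ Finset.range (n+2), q^k * (A k * (-p))
      = -(starPow p n q * p) := by
    rw [Finset.sum_range_succ,
      show A (n+1) = 0 from convPow_eq_zero p n (n+1) (by omega)]
    unfold starPow
    simp only [zero_mul, mul_zero, add_zero, mul_neg, neg_zero, ← mul_assoc]
    rw [Finset.sum_neg_distrib, ← Finset.sum_mul]
  rw [e1, e2, sub_eq_add_neg]

/-- Quaternionic binomial theorem for regular powers. -/
theorem regular_binomial (p : ℍ) (m : ℕ) (q : ℍ) :
    q^m = ∑ k ∈ Finset.range (m+1), starPow p k q * (p^(m-k) * ((m.choose k : ℕ) : ℍ)) := by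
  induction m with
  | zero =>
    have h0 : starPow p 0 q = 1 := by
      unfold starPow
      rw [Finset.sum_range_one]
      show q^0 * (if (0:ℕ) = 0 then (1:ℍ) else 0) = 1
      simp
    simp [h0]
  | succ m ih =>
    have key : ∀ k ∈ Finset.range (m+1),
        q * (starPow p k q * (p^(m-k) * ((m.choose k : ℕ) : ℍ)))
        = starPow p (k+1) q * (p^(m-k) * ((m.choose k : ℕ) : ℍ))
          + starPow p k q * (p^(m+1-k) * ((m.choose k : ℕ) : ℍ)) := by
      intro k hk
      simp only [Finset.mem_range] at hk
      have h2 : q * starPow p k q = starPow p (k+1) q + starPow p k q * p := by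
        rw [starPow_succ]; noncomm_ring
      have hp : p^(m+1-k) = p * p^(m-k) := by
        rw [← pow_succ']
        congr 1
        omega
      rw [← mul_assoc, h2, hp]
      noncomm_ring
    calc q^(m+1) = q * q^m := by rw [pow_succ']
      _ = ∑ k ∈ Finset.range (m+1),
            q * (starPow p k q * (p^(m-k) * ((m.choose k : ℕ) : ℍ))) := by
          rw [ih, Finset.mul_sum]
      _ = (∑ k ∈ Finset.range (m+1), starPow p (k+1) q * (p^(m-k) * ((m.choose k : ℕ) : ℍ)))
          + ∑ k ∈ Finset.range (m+1), starPow p k q * (p^(m+1-k) * ((m.choose k : ℕ) : ℍ)) := by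
          rw [← Finset.sum_add_distrib]
          exact Finset.sum_congr rfl key
      _ = ∑ k ∈ Finset.range (m+2), starPow p k q * (p^(m+1-k) * (((m+1).choose k : ℕ) : ℍ)) := by
          rw [Finset.sum_range_succ' (fun k => starPow p k q * (p^(m+1-k) * (((m+1).choose k : ℕ) : ℍ))) (m+1)]
          simp only [Nat.succ_sub_succ, Nat.choose_succ_succ, Nat.succ_eq_add_one, Nat.cast_add,
            Nat.sub_zero, Nat.choose_zero_right, Nat.cast_one, mul_one, mul_add,
            Finset.sum_add_distrib]
          rw [Finset.sum_range_succ (fun k => starPow p (k+1) q * (p^(m-k) * ((m.choose (k+1) : ℕ) : ℍ))) m]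
          rw [Finset.sum_range_succ' (fun k => starPow p k q * (p^(m+1-k) * ((m.choose k : ℕ) : ℍ))) m]
          simp only [Nat.choose_succ_self, Nat.cast_zero, mul_zero, add_zero, Nat.succ_sub_succ,
            Nat.sub_zero, Nat.choose_zero_right, Nat.cast_one, mul_one, Nat.succ_eq_add_one]
          abel
end

section
/- Define ω(q,p) = sqrt((Re q - Re p)² + (|Im q| + |Im p|)²) and σ(q,p) = |q-p| if p and q lie in a common complex line L_I, and σ(q,p) = ω(q,p) otherwise. Then σ is a metric on H: it is nonnegative, vanishes exactly on the diagonal, is symmetric, and satisfies the triangle inequality. -/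
local notation "ℍ" => Quaternion ℝ

/-!
Fold `ℍ` onto the closed upper half-plane by `q ↦ z q = Re q + ‖Im q‖ i`. Then `ω(q, p)` is the
distance from `z q` to the mirror image `conj (z p)`, and `‖q - p‖` lies between `‖z q - z p‖` and
`ω(q, p)`. Hence `ω(q, p) ≤ ‖z q - z o‖ + ω(o, p)` is the planar triangle inequality, and it bounds
`σ(q, p)` by `σ(q, o) + σ(o, p)` as soon as `σ(o, p) = ω(o, p)`, or symmetrically
`σ(q, o) = ω(q, o)`. When neither holds, `o` lies on a common complex line with `q` and with `p`
while `q, p` do not; since two distinct complex lines meet only in `ℝ`, `o` is real, and then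
`ω(o, p) = ‖o - p‖ = σ(o, p)` after all.
-/

open ComplexConjugate

namespace Quaternion

lemma norm_sq_eq_re_sq_add_norm_im_sq (x : Quaternion ℝ) : ‖x‖ ^ 2 = x.re ^ 2 + ‖x.im‖ ^ 2 := by
  rw [sq, sq ‖x.im‖, ← normSq_eq_norm_mul_self, ← normSq_eq_norm_mul_self, normSq_def', normSq_def']
  simp only [re_im, imI_im, imJ_im, imK_im]
  ring

lemma sq_norm_sub (q p : Quaternion ℝ) :
    ‖q - p‖ ^ 2 = (q.re - p.re) ^ 2 + ‖q.im - p.im‖ ^ 2 := by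
  rw [norm_sq_eq_re_sq_add_norm_im_sq, re_sub, im_sub]

lemma im_eq_self_of_sq_eq_neg_one {I : Quaternion ℝ} (hI : I ^ 2 = -1) : I.im = I := by
  have hnorm : normSq I = 1 := by
    have := congrArg normSq hI
    rw [map_pow, normSq_neg, map_one] at this
    nlinarith [normSq_nonneg (a := I)]
  have hre : I.re = 0 := by rw [← sq_eq_neg_normSq, hI, hnorm, coe_one]
  nth_rw 2 [← I.re_add_im]
  rw [hre, coe_zero, zero_add]

lemma inv_norm_smul_sq_eq_neg_one {v : Quaternion ℝ} (hv : v.re = 0) (hv0 : v ≠ 0) :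
    (‖v‖⁻¹ • v) ^ 2 = -1 := by
  have hnorm : ‖v‖ ≠ 0 := norm_ne_zero_iff.mpr hv0
  rw [smul_pow, sq_eq_neg_normSq.mpr hv, normSq_eq_norm_mul_self, smul_neg, smul_coe, ← sq,
    inv_pow, inv_mul_cancel₀ (pow_ne_zero 2 hnorm), coe_one]

lemma exists_sq_eq_neg_one_im_eq_smul (q : Quaternion ℝ) :
    ∃ I : Quaternion ℝ, I ^ 2 = -1 ∧ ∃ b : ℝ, q.im = b • I := by
  by_cases h : q.im = 0
  · have hi : (⟨0, 1, 0, 0⟩ : Quaternion ℝ) ^ 2 = -1 := by ext <;> simp [sq]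
    exact ⟨_, hi, 0, h.trans (zero_smul ℝ _).symm⟩
  · refine ⟨‖q.im‖⁻¹ • q.im, inv_norm_smul_sq_eq_neg_one q.im.re_im h, ‖q.im‖, ?_⟩
    rw [smul_smul, mul_inv_cancel₀ (norm_ne_zero_iff.mpr h), one_smul]

end Quaternion

lemma sameLine_iff {q p : ℍ} :
    SameLine q p ↔ ∃ I : ℍ, I ^ 2 = -1 ∧ (∃ b : ℝ, q.im = b • I) ∧ ∃ b : ℝ, p.im = b • I := by
  have im_of_eq {x I : ℍ} (hI : I ^ 2 = -1) {a b : ℝ} (hx : x = a + b • I) : x.im = b • I := by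
    rw [hx, Quaternion.im_add, Quaternion.im_coe, zero_add, Quaternion.im_smul,
      Quaternion.im_eq_self_of_sq_eq_neg_one hI]
  constructor
  · rintro ⟨I, hI, ⟨_, b, hq⟩, ⟨_, c, hp⟩⟩
    exact ⟨I, hI, ⟨b, im_of_eq hI hq⟩, ⟨c, im_of_eq hI hp⟩⟩
  · rintro ⟨I, hI, ⟨b, hq⟩, ⟨c, hp⟩⟩
    exact ⟨I, hI, ⟨q.re, b, by rw [← hq, Quaternion.re_add_im]⟩,
      ⟨p.re, c, by rw [← hp, Quaternion.re_add_im]⟩⟩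

lemma SameLine.refl (q : ℍ) : SameLine q q := by
  obtain ⟨I, hI, hq⟩ := Quaternion.exists_sq_eq_neg_one_im_eq_smul q
  exact sameLine_iff.mpr ⟨I, hI, hq, hq⟩

lemma SameLine.symm {q p : ℍ} : SameLine q p → SameLine p q :=
  fun ⟨I, hI, hq, hp⟩ => ⟨I, hI, hp, hq⟩

lemma SameLine.trans {q o p : ℍ} (hqo : SameLine q o) (hop : SameLine o p) (ho : o.im ≠ 0) :
    SameLine q p := by
  obtain ⟨I, -, ⟨b₁, hq⟩, ⟨b₂, ho₁⟩⟩ := sameLine_iff.mp hqo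
  obtain ⟨J, hJ, ⟨b₃, ho₂⟩, hp⟩ := sameLine_iff.mp hop
  have hb₂ : b₂ ≠ 0 := by
    rintro rfl
    exact ho (by rw [ho₁, zero_smul])
  have hIJ : I = (b₂⁻¹ * b₃) • J := by
    rw [mul_smul, ← ho₂, ho₁, smul_smul, inv_mul_cancel₀ hb₂, one_smul]
  exact sameLine_iff.mpr ⟨J, hJ, ⟨b₁ * (b₂⁻¹ * b₃), by rw [hq, hIJ, smul_smul]⟩, hp⟩

noncomputable def halfPlanePoint (q : ℍ) : ℂ := ⟨q.re, ‖q.im‖⟩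

lemma sq_norm_halfPlanePoint_sub (q p : ℍ) :
    ‖halfPlanePoint q - halfPlanePoint p‖ ^ 2 = (q.re - p.re) ^ 2 + (‖q.im‖ - ‖p.im‖) ^ 2 := by
  rw [Complex.sq_norm, Complex.normSq_apply]
  simp only [halfPlanePoint, Complex.sub_re, Complex.sub_im]
  ring

lemma sq_norm_halfPlanePoint_sub_conj (q p : ℍ) :
    ‖halfPlanePoint q - conj (halfPlanePoint p)‖ ^ 2 =
      (q.re - p.re) ^ 2 + (‖q.im‖ + ‖p.im‖) ^ 2 := by
  rw [Complex.sq_norm, Complex.normSq_apply]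
  simp only [halfPlanePoint, Complex.sub_re, Complex.sub_im, Complex.conj_re, Complex.conj_im]
  ring

lemma norm_halfPlanePoint_sub_le (q p : ℍ) :
    ‖halfPlanePoint q - halfPlanePoint p‖ ≤ ‖q - p‖ := by
  rw [← sq_le_sq₀ (norm_nonneg _) (norm_nonneg _), sq_norm_halfPlanePoint_sub,
    Quaternion.sq_norm_sub]
  have := sq_le_sq.mpr ((abs_norm_sub_norm_le q.im p.im).trans (le_abs_self _))
  linarith

lemma omegaDist_eq_norm_halfPlanePoint_sub_conj (q p : ℍ) :
    omegaDist q p = ‖halfPlanePoint q - conj (halfPlanePoint p)‖ := by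
  rw [omegaDist, ← sq_norm_halfPlanePoint_sub_conj, Real.sqrt_sq (norm_nonneg _)]

lemma norm_sub_le_omegaDist (q p : ℍ) : ‖q - p‖ ≤ omegaDist q p := by
  rw [omegaDist_eq_norm_halfPlanePoint_sub_conj, ← sq_le_sq₀ (norm_nonneg _) (norm_nonneg _),
    sq_norm_halfPlanePoint_sub_conj, Quaternion.sq_norm_sub]
  gcongr
  exact norm_sub_le _ _

lemma omegaDist_le_norm_halfPlanePoint_sub_add (q o p : ℍ) :
    omegaDist q p ≤ ‖halfPlanePoint q - halfPlanePoint o‖ + omegaDist o p := by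
  simp only [omegaDist_eq_norm_halfPlanePoint_sub_conj]
  exact norm_sub_le_norm_sub_add_norm_sub _ _ _

lemma omegaDist_comm (q p : ℍ) : omegaDist q p = omegaDist p q := by
  simp only [omegaDist]
  ring_nf

lemma omegaDist_eq_norm_sub_of_im_eq_zero {o : ℍ} (ho : o.im = 0) (p : ℍ) :
    omegaDist o p = ‖o - p‖ := by
  rw [omegaDist, ← Real.sqrt_sq (norm_nonneg (o - p)), Quaternion.sq_norm_sub, ho, zero_sub,
    norm_neg, norm_zero, zero_add]

lemma sigmaDist_of_sameLine {q p : ℍ} (h : SameLine q p) : sigmaDist q p = ‖q - p‖ := if_pos h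

lemma sigmaDist_of_not_sameLine {q p : ℍ} (h : ¬SameLine q p) : sigmaDist q p = omegaDist q p :=
  if_neg h

lemma norm_sub_le_sigmaDist (q p : ℍ) : ‖q - p‖ ≤ sigmaDist q p := by
  by_cases h : SameLine q p
  · exact (sigmaDist_of_sameLine h).ge
  · exact (sigmaDist_of_not_sameLine h).symm ▸ norm_sub_le_omegaDist q p

lemma sigmaDist_eq_omegaDist_of_im_eq_zero {o : ℍ} (ho : o.im = 0) (p : ℍ) :
    sigmaDist o p = omegaDist o p := by
  by_cases h : SameLine o p
  · rw [sigmaDist_of_sameLine h, omegaDist_eq_norm_sub_of_im_eq_zero ho]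
  · exact sigmaDist_of_not_sameLine h

lemma omegaDist_le_sigmaDist_add_sigmaDist {q o p : ℍ} (h : ¬SameLine o p ∨ o.im = 0) :
    omegaDist q p ≤ sigmaDist q o + sigmaDist o p := by
  have hop : sigmaDist o p = omegaDist o p := h.elim sigmaDist_of_not_sameLine
    (sigmaDist_eq_omegaDist_of_im_eq_zero · p)
  calc omegaDist q p ≤ ‖halfPlanePoint q - halfPlanePoint o‖ + omegaDist o p :=
        omegaDist_le_norm_halfPlanePoint_sub_add q o p
    _ ≤ sigmaDist q o + sigmaDist o p := by
        rw [hop]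
        gcongr
        exact (norm_halfPlanePoint_sub_le q o).trans (norm_sub_le_sigmaDist q o)

lemma sigmaDist_comm (q p : ℍ) : sigmaDist q p = sigmaDist p q := by
  by_cases h : SameLine q p
  · rw [sigmaDist_of_sameLine h, sigmaDist_of_sameLine h.symm, norm_sub_rev]
  · rw [sigmaDist_of_not_sameLine h, sigmaDist_of_not_sameLine (mt SameLine.symm h),
      omegaDist_comm]

lemma sigmaDist_triangle (q o p : ℍ) : sigmaDist q p ≤ sigmaDist q o + sigmaDist o p := by
  by_cases hqp : SameLine q p
  · rw [sigmaDist_of_sameLine hqp]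
    exact (norm_sub_le_norm_sub_add_norm_sub q o p).trans
      (add_le_add (norm_sub_le_sigmaDist q o) (norm_sub_le_sigmaDist o p))
  rw [sigmaDist_of_not_sameLine hqp]
  by_cases hqo : SameLine q o
  · apply omegaDist_le_sigmaDist_add_sigmaDist
    by_contra! h
    exact hqp (hqo.trans h.1 h.2)
  · rw [omegaDist_comm, sigmaDist_comm q o, sigmaDist_comm o p, add_comm]
    exact omegaDist_le_sigmaDist_add_sigmaDist (.inl (mt SameLine.symm hqo))

theorem sigma_is_metric :
    (∀ q p : ℍ, 0 ≤ sigmaDist q p) ∧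
    (∀ q p : ℍ, sigmaDist q p = 0 ↔ q = p) ∧
    (∀ q p : ℍ, sigmaDist q p = sigmaDist p q) ∧
    (∀ q o p : ℍ, sigmaDist q p ≤ sigmaDist q o + sigmaDist o p) := by
  have nonneg (q p : ℍ) : 0 ≤ sigmaDist q p := (norm_nonneg _).trans (norm_sub_le_sigmaDist q p)
  refine ⟨nonneg, fun q p => ⟨fun h => ?_, ?_⟩, sigmaDist_comm, sigmaDist_triangle⟩
  · rw [← sub_eq_zero, ← norm_le_zero_iff, ← h]
    exact norm_sub_le_sigmaDist q p
  · rintro rfl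
    rw [sigmaDist_of_sameLine (SameLine.refl q), sub_self, norm_zero]
end

section
/- Let P(q) = q - p with p ∈ L_I, let z = x + Iy ∈ L_I and q = x + Jy with J ∈ 𝕊. Then the regular power satisfies P^{*n}(q) = ((1-JI)/2)(z-p)ⁿ + ((1+JI)/2)(z̄-p)ⁿ. -/
local notation "ℍ" => Quaternion ℝ

open Polynomial in

/-! On the slice `L_I` the regular power is the ordinary power `(z - p)ⁿ`, because `z` and `p`
commute. A point `q = x + Jy` of the sphere is intertwined with `z` and `z̄` by
`A = (1 - JI)/2` and `B = (1 + JI)/2`: `q A = A z`, `q B = B z̄` and `A + B = 1`, so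
`qᵏ = A zᵏ + B z̄ᵏ` for every `k`. As the coefficients of `(q - p)^{*n}` stand to the right of
`qᵏ`, the representation follows coefficientwise. -/

open Polynomial in
lemma binomSeq_eq_coeff (p : ℍ) (k : ℕ) : binomSeq p k = (X - C p).coeff k := by
  rcases k with _ | _ | k <;> simp [binomSeq, coeff_sub, coeff_X, coeff_C]

open Polynomial in
lemma convPow_binomSeq_eq_coeff (p : ℍ) (n k : ℕ) :
    convPow (binomSeq p) n k = ((X - C p) ^ n).coeff k := by
  induction n generalizing k with
  | zero => rcases k with _ | k <;> simp [convPow, coeff_one]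
  | succ n ih =>
    simp only [convPow, conv]
    rw [pow_succ, coeff_mul, Finset.Nat.sum_antidiagonal_eq_sum_range_succ_mk]
    exact Finset.sum_congr rfl fun j _ => by rw [ih, binomSeq_eq_coeff]

open Polynomial in
lemma convPow_binomSeq (p : ℍ) (n k : ℕ) :
    convPow (binomSeq p) n k = (-p) ^ (n - k) * n.choose k := by
  rw [convPow_binomSeq_eq_coeff, sub_eq_add_neg, ← C_neg, coeff_X_add_C_pow]

lemma starPow_of_commute {p q : ℍ} (h : Commute q p) (n : ℕ) : starPow p n q = (q - p) ^ n := by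
  rw [starPow, sub_eq_add_neg, h.neg_right.add_pow]
  exact Finset.sum_congr rfl fun k _ => by rw [convPow_binomSeq, mul_assoc]

lemma starPow_eq_add_of_semiconjBy {p q z w A B : ℍ} (hA : SemiconjBy A z q)
    (hB : SemiconjBy B w q) (hAB : A + B = 1) (n : ℕ) :
    starPow p n q = A * starPow p n z + B * starPow p n w := by
  have hpow (k : ℕ) : q ^ k = A * z ^ k + B * w ^ k := by
    rw [← mul_one (q ^ k), ← hAB, mul_add, (hA.pow_right k).eq, (hB.pow_right k).eq]
  simp only [starPow, Finset.mul_sum, ← Finset.sum_add_distrib, hpow, add_mul, mul_assoc]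

section ImaginaryUnits

variable {R : Type*} [Ring R] {I J : R}

lemma semiconjBy_one_sub_mul (hI : I * I = -1) (hJ : J * J = -1) :
    SemiconjBy (1 - J * I) I J := by
  have hl : (1 - J * I) * I = I + J := by rw [sub_mul, mul_assoc, hI]; noncomm_ring
  have hr : J * (1 - J * I) = J + I := by rw [mul_sub, ← mul_assoc, hJ]; noncomm_ring
  rw [SemiconjBy, hl, hr, add_comm]

lemma semiconjBy_one_add_mul (hI : I * I = -1) (hJ : J * J = -1) :
    SemiconjBy (1 + J * I) (-I) J := by
  have hl : (1 + J * I) * -I = J - I := by rw [mul_neg, add_mul, mul_assoc, hI]; noncomm_ring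
  have hr : J * (1 + J * I) = J - I := by rw [mul_add, ← mul_assoc, hJ]; noncomm_ring
  rw [SemiconjBy, hl, hr]

end ImaginaryUnits

lemma SemiconjBy.real_add_smul {A u v : ℍ} (h : SemiconjBy A u v) (x y : ℝ) :
    SemiconjBy A ((x : ℍ) + y • u) ((x : ℍ) + y • v) :=
  SemiconjBy.add_right (Quaternion.coe_commute x A).symm (h.smul_right y)

lemma SemiconjBy.div_two {A u v : ℍ} (h : SemiconjBy A u v) : SemiconjBy (A / 2) u v :=
  h.mul_left (Commute.ofNat_left 2 u).inv_left₀

lemma Commute.real_add_smul {u v : ℍ} (h : Commute u v) (x y a b : ℝ) :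
    Commute ((x : ℍ) + y • u) ((a : ℍ) + b • v) :=
  (Quaternion.coe_commute x _).add_left
    ((Quaternion.coe_commute a _).symm.add_right ((h.smul_left y).smul_right b))

lemma re_eq_zero_of_sq_eq_neg_one {I : ℍ} (hI : I ^ 2 = -1) : I.re = 0 := by
  have h := congrArg (fun q : ℍ => (q.re, q.imI, q.imJ, q.imK)) hI
  simp only [sq, Quaternion.re_mul, Quaternion.imI_mul, Quaternion.imJ_mul, Quaternion.imK_mul,
    Quaternion.re_neg, Quaternion.re_one, Quaternion.imI_neg, Quaternion.imI_one, neg_zero,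
    Quaternion.imJ_neg, Quaternion.imJ_one, Quaternion.imK_neg, Quaternion.imK_one,
    Prod.mk.injEq] at h
  -- The imaginary parts of `I² = -1` read `2 re(I) im(I) = 0`, so `re(I) ≠ 0` would make `I`
  -- real with `re(I)² = -1`.
  nlinarith [sq_nonneg I.re, sq_nonneg I.imI, sq_nonneg I.imJ, sq_nonneg I.imK]

lemma star_real_add_smul {I : ℍ} (hI : I ^ 2 = -1) (x y : ℝ) :
    star ((x : ℍ) + y • I) = (x : ℍ) + y • -I := by
  rw [star_add, Quaternion.star_smul, Quaternion.star_coe,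
    Quaternion.star_eq_neg.mpr (re_eq_zero_of_sq_eq_neg_one hI)]

theorem starPow_representation (I J : ℍ) (hI : I^2 = -1) (hJ : J^2 = -1)
    (p : ℍ) (hp : ∃ a b : ℝ, p = (a : ℍ) + b • I) (x y : ℝ) (n : ℕ) :
    starPow p n ((x : ℍ) + y • J) =
      ((1 - J*I)/2) * (((x : ℍ) + y • I) - p)^n +
      ((1 + J*I)/2) * ((star ((x : ℍ) + y • I)) - p)^n := by
  obtain ⟨a, b, rfl⟩ := hp
  have hI' : I * I = -1 := by rw [← sq, hI]
  have hJ' : J * J = -1 := by rw [← sq, hJ]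
  have hA := ((semiconjBy_one_sub_mul hI' hJ').real_add_smul x y).div_two
  have hB := ((semiconjBy_one_add_mul hI' hJ').real_add_smul x y).div_two
  have hAB : (1 - J * I) / 2 + (1 + J * I) / 2 = 1 := by
    have h2 : (2 : ℍ) ≠ 0 := fun h => two_ne_zero (congrArg QuaternionAlgebra.re h : (2 : ℝ) = 0)
    rw [← add_div, sub_add_add_cancel, one_add_one_eq_two, div_self h2]
  rw [star_real_add_smul hI, starPow_eq_add_of_semiconjBy hA hB hAB,
    starPow_of_commute ((Commute.refl I).real_add_smul x y a b),
    starPow_of_commute ((Commute.refl I).neg_left.real_add_smul x y a b)]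
end

section
/- Let f(q) = ∑ₙ qⁿ aₙ be a quaternionic power series with radius of convergence R > 0, and let x, y ∈ ℝ with x² + y² < R². Then there exist quaternions b and c (depending only on x, y) such that f(x + Iy) = b + Ic for every I ∈ 𝕊 = {q ∈ H : q² = -1}. -/
/-!
Every imaginary unit `I` spans a copy `ℝ[I] ≅ ℂ` (via `x + iy ↦ x + yI`), so with `z = x + iy` we get
`(x + yI)ⁿ = Re(zⁿ) + Im(zⁿ) I`. Hence `f(x + yI) = ∑ Re(zⁿ) aₙ + I ∑ Im(zⁿ) aₙ`, and both series
converge absolutely because `|Re(zⁿ)|, |Im(zⁿ)| ≤ |z|ⁿ` and `|z| = √(x² + y²) < R`.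
-/

local notation "ℍ" => Quaternion ℝ

theorem Summable.smul_of_abs_le {E : Type*} [NormedAddCommGroup E] [NormedSpace ℝ E]
    [CompleteSpace E] {r c : ℕ → ℝ} {a : ℕ → E} (h : Summable fun n => r n * ‖a n‖)
    (hc : ∀ n, |c n| ≤ r n) : Summable fun n => c n • a n :=
  .of_norm_bounded h fun n => by
    rw [norm_smul, Real.norm_eq_abs]
    exact mul_le_mul_of_nonneg_right (hc n) (norm_nonneg _)

section ImaginaryUnit

variable {A : Type*}

theorem pow_algebraMap_add_smul_of_mul_self_eq_neg_one [Ring A] [Algebra ℝ A] {I : A}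
    (hI : I * I = -1) (z : ℂ) (n : ℕ) :
    (algebraMap ℝ A z.re + z.im • I) ^ n = algebraMap ℝ A (z ^ n).re + (z ^ n).im • I := by
  simpa only [Complex.liftAux_apply] using (map_pow (Complex.liftAux I hI) z n).symm

theorem tsum_pow_mul_eq_add_mul_of_mul_self_eq_neg_one [NormedRing A] [NormedAlgebra ℝ A]
    [CompleteSpace A] {a : ℕ → A} {z : ℂ} (h : Summable fun n => ‖z‖ ^ n * ‖a n‖) {I : A}
    (hI : I * I = -1) :
    ∑' n, (algebraMap ℝ A z.re + z.im • I) ^ n * a n =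
      (∑' n, (z ^ n).re • a n) + I * ∑' n, (z ^ n).im • a n := by
  have hre : Summable fun n => (z ^ n).re • a n :=
    h.smul_of_abs_le fun n => (norm_pow z n).subst (Complex.abs_re_le_norm (z ^ n))
  have him : Summable fun n => (z ^ n).im • a n :=
    h.smul_of_abs_le fun n => (norm_pow z n).subst (Complex.abs_im_le_norm (z ^ n))
  have hterm : ∀ n, (algebraMap ℝ A z.re + z.im • I) ^ n * a n
      = (z ^ n).re • a n + I * ((z ^ n).im • a n) := fun n => by
    rw [pow_algebraMap_add_smul_of_mul_self_eq_neg_one hI, add_mul, ← Algebra.smul_def,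
      smul_mul_assoc, mul_smul_comm]
  rw [tsum_congr hterm, hre.tsum_add (him.mul_left I), him.tsum_mul_left]

end ImaginaryUnit

theorem representation_exists (a : ℕ → ℍ) (R : ℝ) (hR : 0 < R)
    (hconv : ∀ q : ℍ, ‖q‖ < R → Summable (fun n : ℕ => ‖q^n * a n‖))
    (x y : ℝ) (hxy : x^2 + y^2 < R^2) :
    ∃ b c : ℍ, ∀ I : ℍ, I^2 = -1 →
      ∑' n : ℕ, ((x : ℍ) + y • I)^n * a n = b + I * c := by
  set z : ℂ := ⟨x, y⟩
  have hz : ‖z‖ < R := by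
    refine lt_of_pow_lt_pow_left₀ 2 hR.le ?_
    rwa [Complex.sq_norm, Complex.normSq_mk, ← sq, ← sq]
  have hsum : Summable fun n => ‖z‖ ^ n * ‖a n‖ := by
    simpa [norm_mul, norm_pow, Quaternion.norm_coe] using hconv (‖z‖ : ℍ) (by simpa using hz)
  refine ⟨∑' n, (z ^ n).re • a n, ∑' n, (z ^ n).im • a n, fun I hI => ?_⟩
  rw [sq] at hI
  simpa [z, QuaternionAlgebra.coe_algebraMap] using
    tsum_pow_mul_eq_add_mul_of_mul_self_eq_neg_one hsum hI
end

section
/- Let f(q) = ∑ₙ qⁿ aₙ have radius of convergence R > 0 and let x + 𝕊y ⊂ B(0,R). Then for all I, J ∈ 𝕊, f(x+Jy) = ((1-JI)/2) f(x+Iy) + ((1+JI)/2) f(x-Iy). -/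
local notation "ℍ" => Quaternion ℝ

/-! The map `x + iy ↦ x + yK` is, for every `K` with `K² = -1`, a real algebra embedding
`ℂ → ℍ` (`Complex.liftAux`) and an isometry. Hence with `z = x + iy` we get
`(x + yK)ⁿ = Re zⁿ + K Im zⁿ`, so `f(x + yK) = b + K c` where `b = ∑ Re zⁿ aₙ` and `c = ∑ Im zⁿ aₙ`
do not depend on `K`. The formula is then the identity
`((1 - JI)/2)(b + Ic) + ((1 + JI)/2)(b - Ic) = b + Jc`, which only needs `I² = -1`. -/

theorem Complex.liftAux_ofReal_add_ofReal_mul_I {A : Type*} [Ring A] [Algebra ℝ A] {K : A}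
    (hK : K * K = -1) (x y : ℝ) :
    Complex.liftAux K hK (x + y * Complex.I) = algebraMap ℝ A x + y • K := by
  simp [Complex.liftAux_apply]

section

variable {K : ℍ}

theorem Quaternion.norm_eq_one_of_mul_self_eq_neg_one (hK : K * K = -1) : ‖K‖ = 1 := by
  have h : ‖K‖ * ‖K‖ = 1 := by rw [← norm_mul, hK, norm_neg, norm_one]
  nlinarith [norm_nonneg K]

theorem Quaternion.star_eq_neg_of_mul_self_eq_neg_one (hK : K * K = -1) : star K = -K := by
  have hstar : star K * K = 1 := by
    rw [star_mul_self, normSq_eq_norm_mul_self, norm_eq_one_of_mul_self_eq_neg_one hK, mul_one,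
      coe_one]
  calc star K = star K * (K * -K) := by rw [mul_neg, hK, neg_neg, mul_one]
    _ = -K := by rw [← mul_assoc, hstar, one_mul]

theorem Quaternion.star_liftAux (hK : K * K = -1) (z : ℂ) :
    star (Complex.liftAux K hK z) = Complex.liftAux K hK (starRingEnd ℂ z) := by
  simp [Complex.liftAux_apply, star_eq_neg_of_mul_self_eq_neg_one hK]

theorem Quaternion.norm_liftAux (hK : K * K = -1) (z : ℂ) : ‖Complex.liftAux K hK z‖ = ‖z‖ := by
  have h : normSq (Complex.liftAux K hK z) = Complex.normSq z := by
    apply coe_injective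
    rw [← self_mul_star, star_liftAux, ← map_mul, Complex.mul_conj, Complex.liftAux_apply]
    simp
  rw [← mul_self_inj (norm_nonneg _) (norm_nonneg _), ← normSq_eq_norm_mul_self, h,
    Complex.normSq_eq_norm_sq, sq]

end

section

variable (a : ℕ → ℍ)

noncomputable def reSeries (z : ℂ) : ℍ := ∑' n, ((z ^ n).re : ℍ) * a n

noncomputable def imSeries (z : ℂ) : ℍ := ∑' n, ((z ^ n).im : ℍ) * a n

variable {a} {z : ℂ}

theorem summable_coe_mul_of_abs_le {w : ℕ → ℝ} (hw : ∀ n, |w n| ≤ ‖z‖ ^ n)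
    (ha : Summable fun n => ‖z‖ ^ n * ‖a n‖) : Summable fun n => (w n : ℍ) * a n :=
  ha.of_norm_bounded fun n => by
    rw [norm_mul, Quaternion.norm_coe]
    exact mul_le_mul_of_nonneg_right (hw n) (norm_nonneg _)

theorem tsum_liftAux_pow_mul {K : ℍ} (hK : K * K = -1)
    (ha : Summable fun n => ‖z‖ ^ n * ‖a n‖) :
    ∑' n, Complex.liftAux K hK z ^ n * a n = reSeries a z + K * imSeries a z := by
  have hre : Summable fun n => ((z ^ n).re : ℍ) * a n :=
    summable_coe_mul_of_abs_le (fun n => norm_pow z n ▸ Complex.abs_re_le_norm _) ha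
  have him : Summable fun n => ((z ^ n).im : ℍ) * a n :=
    summable_coe_mul_of_abs_le (fun n => norm_pow z n ▸ Complex.abs_im_le_norm _) ha
  have hterm : ∀ n, Complex.liftAux K hK z ^ n * a n
      = ((z ^ n).re : ℍ) * a n + K * (((z ^ n).im : ℍ) * a n) := fun n => by
    rw [← map_pow, Complex.liftAux_apply, add_mul, smul_mul_assoc, ← mul_smul_comm,
      ← Quaternion.coe_mul_eq_smul]
    rfl
  rw [tsum_congr hterm, hre.tsum_add (him.mul_left K), tsum_mul_left, reSeries, imSeries]

end

theorem slice_representation {I : ℍ} (hI : I * I = -1) (J b c : ℍ) :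
    (1 - J * I) / 2 * (b + I * c) + (1 + J * I) / 2 * (b + -I * c) = b + J * c := by
  have hJIIc : J * I * (I * c) = -(J * c) := by
    rw [mul_assoc, ← mul_assoc I, hI, neg_one_mul, mul_neg]
  have hsum : (1 - J * I) * (b + I * c) + (1 + J * I) * (b + -I * c) = (b + J * c) * 2 := by
    simp only [sub_mul, add_mul, one_mul, mul_add, mul_neg, neg_mul, hJIIc, mul_two]
    abel
  have hdiv_mul (u v : ℍ) : u / 2 * v = u * v / 2 := by
    rw [div_eq_mul_inv, div_eq_mul_inv, mul_assoc, mul_assoc,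
      (Commute.ofNat_left 2 v).inv_left₀.eq]
  -- `ℍ` has no `CharZero` instance, so compare real parts
  have htwo : (2 : ℍ) ≠ 0 := fun h => two_ne_zero (congrArg QuaternionAlgebra.re h : (2 : ℝ) = 0)
  rw [hdiv_mul, hdiv_mul, ← add_div, hsum, mul_div_cancel_right₀ _ htwo]

theorem representation_formula (a : ℕ → ℍ) (R : ℝ) (hR : 0 < R)
    (hconv : ∀ q : ℍ, ‖q‖ < R → Summable (fun n : ℕ => ‖q^n * a n‖))
    (x y : ℝ) (hxy : x^2 + y^2 < R^2) (I J : ℍ) (hI : I^2 = -1) (hJ : J^2 = -1) :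
    ∑' n : ℕ, ((x : ℍ) + y • J)^n * a n =
      ((1 - J*I)/2) * ∑' n : ℕ, ((x : ℍ) + y • I)^n * a n +
      ((1 + J*I)/2) * ∑' n : ℕ, ((x : ℍ) - y • I)^n * a n := by
  rw [sq] at hI hJ
  have hnegI : -I * -I = -1 := by rwa [neg_mul_neg]
  set z : ℂ := x + y * Complex.I
  have hz : ‖z‖ < R := by
    rw [Complex.norm_add_mul_I]
    exact (Real.sqrt_lt' hR).mpr hxy
  have ha : Summable fun n => ‖z‖ ^ n * ‖a n‖ := by
    have := hconv _ ((Quaternion.norm_liftAux hI z).trans_lt hz)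
    simpa only [norm_mul, norm_pow, Quaternion.norm_liftAux] using this
  have hpoint {K : ℍ} (hK : K * K = -1) : (x : ℍ) + y • K = Complex.liftAux K hK z :=
    (Complex.liftAux_ofReal_add_ofReal_mul_I hK x y).symm
  rw [sub_eq_add_neg (x : ℍ), ← smul_neg, hpoint hJ, hpoint hI, hpoint hnegI,
    tsum_liftAux_pow_mul hJ ha, tsum_liftAux_pow_mul hI ha, tsum_liftAux_pow_mul hnegI ha]
  exact (slice_representation hI J _ _).symm
end
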